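/- The elevation of the z-doubling: if D_z(w) denotes z-doubling of a word w, then for every prefix length m of w there is a corresponding prefix of D_z(w) whose signed z-count is twice the signed z-count of w[1..m]; consequently, the k-th layer of w equals (as a sequence of non-z letters) the 2k-th layer of D_z(w), and all odd layers of D_z(w) are empty. -/
import Mathlib


/-- The alphabet {x, y, z, x̄, ȳ, z̄}. -/
inductive Letter : Type
  | x | y | z | xb | yb | zb
  deriving DecidableEq, Repr

/-- Formal inverse of a letter. -/
def Letter.inv : Letter → Letter
  | .x => .xb | .xb => .x | .y => .yb | .yb => .y | .z => .zb | .zb => .z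

/-- Abelianization: signed occurrence counts of x, y, z. -/
def ab (w : List Letter) : ℤ × ℤ × ℤ :=
  ((w.count .x : ℤ) - (w.count .xb : ℤ),
   (w.count .y : ℤ) - (w.count .yb : ℤ),
   (w.count .z : ℤ) - (w.count .zb : ℤ))

/-- A word is reduced if no two adjacent letters are formal inverses. -/
def Reduced (w : List Letter) : Prop :=
  List.Chain' (fun a b => b ≠ a.inv) w

/-- A lattice knot: a reduced word with `ab w = 0` such that no proper nonempty
consecutive subword has abelianization zero.  `(w.take b).drop a` is the subword
`w[a+1..b]` in 1-indexed notation. -/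
def IsKnot (w : List Letter) : Prop :=
  Reduced w ∧ ab w = 0 ∧
    ∀ a b : ℕ, a < b → b ≤ w.length → ¬(a = 0 ∧ b = w.length) →
      ab ((w.take b).drop a) ≠ 0
/-- Signed z-count of a word. -/
def zc (w : List Letter) : ℤ := (w.count .z : ℤ) - (w.count .zb : ℤ)

/-- Auxiliary: the sequence of non-z letters of `w` lying at height `n`,
starting from height `h`. -/
def layerAux (n : ℤ) : ℤ → List Letter → List Letter
  | _, [] => []
  | h, c :: rest =>
    if c = Letter.z then layerAux n (h + 1) rest
    else if c = Letter.zb then layerAux n (h - 1) rest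
    else if h = n then c :: layerAux n h rest
    else layerAux n h rest

/-- The n-th layer of a word: the sequence of its non-z entries `w[m]` with
signed z-count of the prefix `w[1..m]` equal to `n`. -/
def layer (n : ℤ) (w : List Letter) : List Letter := layerAux n 0 w

/-- Doubling in the z-direction: z ↦ zz, z̄ ↦ z̄z̄. -/
def Dz (w : List Letter) : List Letter :=
  w.flatMap (fun c => if c = Letter.z ∨ c = Letter.zb then [c, c] else [c])
lemma Dz_cons (c : Letter) (w : List Letter) :
    Dz (c :: w) = (if c = Letter.z ∨ c = Letter.zb then [c, c] else [c]) ++ Dz w := by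
  simp [Dz]

lemma zc_cons (c : Letter) (w : List Letter) :
    zc (c :: w) = (if c = Letter.z then 1 else if c = Letter.zb then -1 else 0) + zc w := by
  cases c <;> simp [zc, List.count_cons] <;> ring

lemma zc_Dz (w : List Letter) : zc (Dz w) = 2 * zc w := by
  induction w with
  | nil => simp [Dz, zc]
  | cons c rest ih =>
    rw [Dz_cons]
    cases c <;> simp [zc_cons, zc, List.count_append, List.count_cons] at * <;> omega

lemma layerAux_Dz_even (w : List Letter) (n h : ℤ) :
    layerAux (2 * n) (2 * h) (Dz w) = layerAux n h w := by
  induction w generalizing h with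
  | nil => simp [Dz, layerAux]
  | cons c rest ih =>
    rw [Dz_cons]
    cases c
    case z =>
      have : (2 : ℤ) * h + 1 + 1 = 2 * (h + 1) := by ring
      simp [layerAux, this, ih]
    case zb =>
      have : (2 : ℤ) * h - 1 - 1 = 2 * (h - 1) := by ring
      simp [layerAux, this, ih]
    all_goals
      by_cases hn : h = n <;>
        simp [layerAux, hn, ih]

lemma layerAux_Dz_odd (w : List Letter) (n h : ℤ) :
    layerAux (2 * n + 1) (2 * h) (Dz w) = [] := by
  induction w generalizing h with
  | nil => simp [Dz, layerAux]
  | cons c rest ih =>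
    rw [Dz_cons]
    cases c
    case z =>
      have : (2 : ℤ) * h + 1 + 1 = 2 * (h + 1) := by ring
      simp [layerAux, this, ih]
    case zb =>
      have : (2 : ℤ) * h - 1 - 1 = 2 * (h - 1) := by ring
      simp [layerAux, this, ih]
    all_goals
      have : ¬ ((2:ℤ) * h = 2 * n + 1) := by omega
      simp [layerAux, this, ih]

/-- for every prefix of `w` there is a prefix of `Dz w` with
twice the signed z-count; consequently the k-th layer of w equals the 2k-th
layer of `Dz w`, and all odd layers of `Dz w` are empty. -/
theorem layers_of_Dz (w : List Letter) :
    (∀ m : ℕ, m ≤ w.length → ∃ M : ℕ, M ≤ (Dz w).length ∧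
        zc ((Dz w).take M) = 2 * zc (w.take m)) ∧
    (∀ k : ℤ, layer (2 * k) (Dz w) = layer k w) ∧
    (∀ k : ℤ, layer (2 * k + 1) (Dz w) = []) := by
  refine ⟨?_, ?_, ?_⟩
  · intro m hm
    refine ⟨(Dz (w.take m)).length, ?_, ?_⟩
    · have : Dz w = Dz (w.take m) ++ Dz (w.drop m) := by
        simp [Dz, ← List.flatMap_append]
      rw [this]; simp
    · have hw : Dz w = Dz (w.take m) ++ Dz (w.drop m) := by
        simp [Dz, ← List.flatMap_append]
      rw [hw, List.take_left, zc_Dz]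
  · intro k
    have := layerAux_Dz_even w k 0
    simpa [layer] using this
  · intro k
    have := layerAux_Dz_odd w k 0
    simpa [layer] using this
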